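/- arXiv:math/0309115 — 5 statements merged into one kernel-verified Lean document; each statement's English description precedes it below -/
import Mathlib

section
/- (Cantor–Lebesgue) If the trigonometric series a_0/2 + \sum_{k=1}^\infty (a_k cos kx + b_k sin kx) converges at every real x, then its coefficients tend to zero: a_k \to 0 and b_k \to 0 as k \to \infty. -/
/-!
Convergence at `x` forces the terms `a k * cos (k x) + b k * sin (k x)` to tend to `0`.
With `ρ k = a k ^ 2 + b k ^ 2`, the functions `(a k * cos (k x) + b k * sin (k x)) ^ 2 / (1 + ρ k)`
are bounded by `1` and tend to `0` pointwise, so by dominated convergence their integrals over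
`[0, 2π]`, which equal `π * ρ k / (1 + ρ k)` by orthogonality, tend to `0`; hence `ρ k → 0`.
-/

open Filter Topology Finset Real

theorem tendsto_atTop_zero_of_tendsto_add_sum_Icc {G : Type*} [AddCommGroup G] [TopologicalSpace G]
    [IsTopologicalAddGroup G] {f : ℕ → G} {c L : G}
    (h : Tendsto (fun n => c + ∑ k ∈ Icc 1 n, f k) atTop (𝓝 L)) : Tendsto f atTop (𝓝 0) := by
  have hdiff := (h.comp (tendsto_add_atTop_nat 1)).sub h
  rw [sub_self] at hdiff
  refine (tendsto_add_atTop_iff_nat 1).mp (hdiff.congr fun n => ?_)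
  simp [sum_Icc_succ_top (Nat.le_add_left 1 n)]

theorem integral_sq_mul_cos_add_mul_sin {k : ℕ} (hk : k ≠ 0) (A B : ℝ) :
    ∫ x in (0 : ℝ)..2 * π, (A * cos (k * x) + B * sin (k * x)) ^ 2 = π * (A ^ 2 + B ^ 2) := by
  have hk' : (k : ℝ) ≠ 0 := Nat.cast_ne_zero.mpr hk
  have hsin : sin (k * (2 * π)) = 0 := by
    rw [show (k : ℝ) * (2 * π) = ((2 * k : ℕ) : ℝ) * π by push_cast; ring]
    exact sin_nat_mul_pi _
  have expand : ∀ u, (A * cos u + B * sin u) ^ 2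
      = A ^ 2 * cos u ^ 2 + (B ^ 2 * sin u ^ 2 + 2 * A * B * (sin u * cos u)) := fun u => by ring
  rw [intervalIntegral.integral_comp_mul_left (fun u => (A * cos u + B * sin u) ^ 2) hk']
  simp only [expand]
  rw [intervalIntegral.integral_add, intervalIntegral.integral_add,
    intervalIntegral.integral_const_mul, intervalIntegral.integral_const_mul,
    intervalIntegral.integral_const_mul, integral_cos_sq, integral_sin_sq, integral_sin_mul_cos₁]
  · simp only [hsin, mul_zero, sin_zero, cos_zero, smul_eq_mul]
    field_simp
    ring
  all_goals exact Continuous.intervalIntegrable (by fun_prop) _ _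

theorem sq_mul_cos_add_mul_sin_le (A B t : ℝ) : (A * cos t + B * sin t) ^ 2 ≤ A ^ 2 + B ^ 2 := by
  nlinarith [sq_nonneg (A * sin t - B * cos t), sin_sq_add_cos_sq t]

theorem tendsto_zero_of_tendsto_div_one_add {α : Type*} {l : Filter α} {ρ : α → ℝ}
    (hρ : ∀ i, 0 ≤ ρ i) (h : Tendsto (fun i => ρ i / (1 + ρ i)) l (𝓝 0)) :
    Tendsto ρ l (𝓝 0) := by
  have hinv := h.div (tendsto_const_nhds.sub h) (by norm_num : (1 : ℝ) - 0 ≠ 0)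
  rw [sub_zero, zero_div] at hinv
  refine hinv.congr fun i => ?_
  have : 1 + ρ i ≠ 0 := by linarith [hρ i]
  simp only [Pi.div_apply]
  field_simp
  ring

theorem tendsto_zero_of_sq_le {α : Type*} {l : Filter α} {f g : α → ℝ}
    (hfg : ∀ i, f i ^ 2 ≤ g i) (hg : Tendsto g l (𝓝 0)) : Tendsto f l (𝓝 0) := by
  refine squeeze_zero_norm (fun i => abs_le_sqrt (hfg i)) ?_
  simpa using hg.sqrt

theorem tendsto_sq_add_sq_of_forall_tendsto_mul_cos_add_mul_sin {a b : ℕ → ℝ}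
    (h : ∀ x : ℝ, Tendsto (fun k : ℕ => a k * cos (k * x) + b k * sin (k * x)) atTop (𝓝 0)) :
    Tendsto (fun k => a k ^ 2 + b k ^ 2) atTop (𝓝 0) := by
  set ρ : ℕ → ℝ := fun k => a k ^ 2 + b k ^ 2
  have hρ : ∀ k, 0 ≤ ρ k := fun k => by positivity
  set g : ℕ → ℝ → ℝ := fun k x => (a k * cos (k * x) + b k * sin (k * x)) ^ 2 / (1 + ρ k)
  have hg_nonneg : ∀ k x, 0 ≤ g k x := fun k x => div_nonneg (sq_nonneg _) (by linarith [hρ k])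
  have hg_le_one : ∀ k x, g k x ≤ 1 := fun k x =>
    (div_le_one (by linarith [hρ k])).2 ((sq_mul_cos_add_mul_sin_le _ _ _).trans (by linarith))
  have hg_lim : ∀ x, Tendsto (fun k => g k x) atTop (𝓝 0) := fun x => by
    refine squeeze_zero (hg_nonneg · x)
      (fun k => div_le_self (sq_nonneg _) (le_add_of_nonneg_right (hρ k))) ?_
    simpa using (h x).pow 2
  have hint : Tendsto (fun k => ∫ x in (0 : ℝ)..2 * π, g k x) atTop (𝓝 0) := by
    simpa using intervalIntegral.tendsto_integral_filter_of_dominated_convergence (fun _ => 1)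
      (Eventually.of_forall fun k => (by fun_prop : Continuous (g k)).aestronglyMeasurable)
      (Eventually.of_forall fun k => Eventually.of_forall fun x _ => by
        rw [norm_of_nonneg (hg_nonneg k x)]; exact hg_le_one k x)
      intervalIntegrable_const (Eventually.of_forall fun x _ => hg_lim x)
  have hint_eq : ∀ᶠ k in atTop, ∫ x in (0 : ℝ)..2 * π, g k x = π * (ρ k / (1 + ρ k)) := by
    filter_upwards [eventually_ne_atTop 0] with k hk
    rw [intervalIntegral.integral_div, integral_sq_mul_cos_add_mul_sin hk, mul_div_assoc]
  refine tendsto_zero_of_tendsto_div_one_add hρ ?_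
  simpa [pi_ne_zero] using (hint.congr' hint_eq).const_mul π⁻¹

/-- (Cantor–Lebesgue) If a trigonometric series converges at every real `x`,
then its coefficients tend to zero. -/
theorem cantor_lebesgue (a b : ℕ → ℝ)
    (h : ∀ x : ℝ, ∃ L : ℝ, Tendsto
      (fun n => a 0 / 2 + ∑ k ∈ Finset.Icc 1 n, (a k * Real.cos (k * x) + b k * Real.sin (k * x)))
      atTop (𝓝 L)) :
    Tendsto a atTop (𝓝 0) ∧ Tendsto b atTop (𝓝 0) := by
  have hterms : ∀ x : ℝ,
      Tendsto (fun k : ℕ => a k * cos (k * x) + b k * sin (k * x)) atTop (𝓝 0) :=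
    fun x => (h x).elim fun _ hL => tendsto_atTop_zero_of_tendsto_add_sum_Icc hL
  have hρ := tendsto_sq_add_sq_of_forall_tendsto_mul_cos_add_mul_sin hterms
  exact ⟨tendsto_zero_of_sq_le (fun k => le_add_of_nonneg_right (sq_nonneg (b k))) hρ,
    tendsto_zero_of_sq_le (fun k => le_add_of_nonneg_left (sq_nonneg (a k))) hρ⟩
end

section
/- (Fatou's example, non-integrability) Let \xi(x) = \sum_{k=1}^\infty sin(kx)/log(k+1) (the series converges for every real x). Then \xi is not Lebesgue integrable on [0, \pi] (hence not on [-\pi, \pi]). Consequently the everywhere convergent trigonometric series \sum_{k=1}^\infty sin(kx)/log(k+1) has a sum that is not Lebesgue integrable. -/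
/-!
If `ξ` were integrable on `[0, π]`, the integrals `∫_{[x, π]} ξ` would be bounded by
`∫_{[0, π]} |ξ|`. On `[x, π]` the partial sums are uniformly bounded (Abel summation
against the Dirichlet-kernel bound `|∑_{k<n} e^{ikt}| ≤ 1 / sin (t / 2)`), so dominated
convergence allows termwise integration:
`∫_{[x, π]} ξ = ∑ (cos kx - cos kπ) / (k log (k + 1))`.
At `x = 1 / m` the terms with `k < m` contribute at least
`cos 1 · ∑_{k<m} 1 / (k log (k + 1))`, while the tail `k ≥ m` and the alternating part
`cos kπ` stay bounded by Abel summation again. As `∑ 1 / (k log (k + 1))` diverges, the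
integrals `∫_{[1/m, π]} ξ` are unbounded.
-/

open Filter Topology Finset Real MeasureTheory

theorem norm_sum_Ico_smul_le_of_antitoneOn {E : Type*} [NormedAddCommGroup E] [NormedSpace ℝ E]
    {f : ℕ → ℝ} {g : ℕ → E} {m n : ℕ} {B : ℝ} (hf : AntitoneOn f (Set.Ici m))
    (hf0 : ∀ k, m ≤ k → 0 ≤ f k) (hg : ∀ k, ‖∑ i ∈ range k, g i‖ ≤ B) :
    ‖∑ i ∈ Ico m n, f i • g i‖ ≤ 2 * B * f m := by
  have hB : 0 ≤ B := (norm_nonneg _).trans (hg 0)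
  rcases le_or_gt n m with hnm | hmn
  · rw [Ico_eq_empty_of_le hnm, sum_empty, norm_zero]
    exact mul_nonneg (mul_nonneg zero_le_two hB) (hf0 m le_rfl)
  have hsmul : ∀ (r : ℝ) k, ‖r • ∑ i ∈ range k, g i‖ ≤ |r| * B := fun r k => by
    rw [norm_smul, Real.norm_eq_abs]; gcongr; exact hg k
  have hdiff : ∑ i ∈ Ico m (n - 1), |f (i + 1) - f i| = f m - f (n - 1) := by
    rw [← neg_sub, ← sum_Ico_sub f (by omega : m ≤ n - 1), ← sum_neg_distrib]
    refine sum_congr rfl fun i hi => ?_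
    have hi := mem_Ico.1 hi
    rw [abs_of_nonpos (sub_nonpos.2 (hf (Set.mem_Ici.2 hi.1) (Set.mem_Ici.2 (by omega))
      (by omega))), neg_sub]
  rw [sum_Ico_by_parts f g hmn]
  calc _ ≤ ‖f (n - 1) • ∑ i ∈ range n, g i‖ + ‖f m • ∑ i ∈ range m, g i‖
        + ∑ i ∈ Ico m (n - 1), ‖(f (i + 1) - f i) • ∑ j ∈ range (i + 1), g j‖ :=
        (norm_sub_le _ _).trans (add_le_add (norm_sub_le _ _) (norm_sum_le _ _))
    _ ≤ |f (n - 1)| * B + |f m| * B + ∑ i ∈ Ico m (n - 1), |f (i + 1) - f i| * B := by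
        gcongr with i <;> exact hsmul _ _
    _ = 2 * B * f m := by
        rw [← sum_mul, hdiff, abs_of_nonneg (hf0 _ (by omega)), abs_of_nonneg (hf0 _ le_rfl)]
        ring

theorem norm_sum_range_exp_mul_I_le {t : ℝ} (ht : 0 < t) (ht' : t < 2 * π) (n : ℕ) :
    ‖∑ k ∈ range n, Complex.exp (↑(k * t) * Complex.I)‖ ≤ 1 / Real.sin (t / 2) := by
  have hsin : 0 < Real.sin (t / 2) := sin_pos_of_pos_of_lt_pi (by linarith) (by linarith)
  have hz : ‖Complex.exp (↑t * Complex.I) - 1‖ = 2 * Real.sin (t / 2) := by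
    rw [mul_comm, Complex.norm_exp_I_mul_ofReal_sub_one, norm_mul, Real.norm_two,
      Real.norm_of_nonneg hsin.le]
  set z := Complex.exp (↑t * Complex.I)
  have hz1 : z ≠ 1 := fun h => by rw [h, sub_self, norm_zero] at hz; linarith
  have hpow : ∀ k : ℕ, Complex.exp (↑(k * t) * Complex.I) = z ^ k := fun k => by
    rw [← Complex.exp_nat_mul]; push_cast; ring_nf
  simp_rw [hpow, geom_sum_eq hz1, norm_div, hz]
  have hnum : ‖z ^ n - 1‖ ≤ 2 := (norm_sub_le _ _).trans <| by
    rw [norm_pow, Complex.norm_exp_ofReal_mul_I, one_pow, norm_one]; norm_num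
  calc ‖z ^ n - 1‖ / (2 * Real.sin (t / 2)) ≤ 2 / (2 * Real.sin (t / 2)) := by gcongr
    _ = 1 / Real.sin (t / 2) := by field_simp

section Dirichlet

variable {f : ℕ → ℝ} {m n : ℕ} {t : ℝ}

theorem abs_sum_Ico_mul_sin_le (hf : AntitoneOn f (Set.Ici m)) (hf0 : ∀ k, m ≤ k → 0 ≤ f k)
    (ht : 0 < t) (ht' : t < 2 * π) :
    |∑ k ∈ Ico m n, f k * Real.sin (k * t)| ≤ 2 * f m / Real.sin (t / 2) := by
  calc _ = |(∑ k ∈ Ico m n, f k • Complex.exp (↑(k * t) * Complex.I)).im| := by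
        simp only [Complex.im_sum, Complex.smul_im, Complex.exp_ofReal_mul_I_im, smul_eq_mul]
    _ ≤ 2 * (1 / Real.sin (t / 2)) * f m := (Complex.abs_im_le_norm _).trans
        (norm_sum_Ico_smul_le_of_antitoneOn hf hf0 (norm_sum_range_exp_mul_I_le ht ht'))
    _ = 2 * f m / Real.sin (t / 2) := by ring

theorem abs_sum_Ico_mul_cos_le (hf : AntitoneOn f (Set.Ici m)) (hf0 : ∀ k, m ≤ k → 0 ≤ f k)
    (ht : 0 < t) (ht' : t < 2 * π) :
    |∑ k ∈ Ico m n, f k * Real.cos (k * t)| ≤ 2 * f m / Real.sin (t / 2) := by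
  calc _ = |(∑ k ∈ Ico m n, f k • Complex.exp (↑(k * t) * Complex.I)).re| := by
        simp only [Complex.re_sum, Complex.smul_re, Complex.exp_ofReal_mul_I_re, smul_eq_mul]
    _ ≤ 2 * (1 / Real.sin (t / 2)) * f m := (Complex.abs_re_le_norm _).trans
        (norm_sum_Ico_smul_le_of_antitoneOn hf hf0 (norm_sum_range_exp_mul_I_le ht ht'))
    _ = 2 * f m / Real.sin (t / 2) := by ring

end Dirichlet

theorem integral_Icc_sin_nat_mul {a c : ℝ} (hac : a ≤ c) (k : ℕ) :
    ∫ t in Set.Icc a c, Real.sin (k * t) = (Real.cos (k * a) - Real.cos (k * c)) / k := by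
  rcases eq_or_ne k 0 with rfl | hk
  · simp
  rw [integral_Icc_eq_integral_Ioc, ← intervalIntegral.integral_of_le hac,
    intervalIntegral.integral_comp_mul_left _ (Nat.cast_ne_zero.2 hk), integral_sin, smul_eq_mul,
    inv_mul_eq_div]

theorem tendsto_sum_integral_of_sin_series {b : ℕ → ℝ} {s : ℕ → Finset ℕ} {ξ : ℝ → ℝ}
    {a c B : ℝ} (hac : a ≤ c)
    (hB : ∀ n, ∀ t ∈ Set.Icc a c, |∑ k ∈ s n, b k * Real.sin (k * t)| ≤ B)
    (hξ : ∀ t ∈ Set.Icc a c,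
      Tendsto (fun n => ∑ k ∈ s n, b k * Real.sin (k * t)) atTop (𝓝 (ξ t))) :
    Tendsto (fun n => ∑ k ∈ s n, b k / k * (Real.cos (k * a) - Real.cos (k * c))) atTop
      (𝓝 (∫ t in Set.Icc a c, ξ t)) := by
  have hcont : ∀ n, Continuous fun t => ∑ k ∈ s n, b k * Real.sin (k * t) := fun n => by fun_prop
  have hDCT := tendsto_integral_of_dominated_convergence (μ := volume.restrict (Set.Icc a c))
    (fun _ => B) (fun n => (hcont n).aestronglyMeasurable)
    (integrableOn_const measure_Icc_lt_top.ne)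
    (fun n => (ae_restrict_iff' measurableSet_Icc).2 (.of_forall (hB n)))
    ((ae_restrict_iff' measurableSet_Icc).2 (.of_forall hξ))
  refine hDCT.congr fun n => ?_
  rw [integral_finsetSum _ fun k _ =>
    (by fun_prop : Continuous fun t => b k * Real.sin (k * t)).integrableOn_Icc]
  refine sum_congr rfl fun k _ => ?_
  rw [integral_const_mul, integral_Icc_sin_nat_mul hac]
  ring

theorem log_natCast_add_one_nonneg (k : ℕ) : 0 ≤ log ((k : ℝ) + 1) := by
  exact_mod_cast log_natCast_nonneg (k + 1)

theorem antitoneOn_inv_log_natCast_add_one :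
    AntitoneOn (fun k : ℕ => (log ((k : ℝ) + 1))⁻¹) (Set.Ici 1) := fun j hj k _ hjk => by
  have hj : (1 : ℝ) ≤ j := by exact_mod_cast hj
  have hjk : (j : ℝ) ≤ k := by exact_mod_cast hjk
  exact inv_anti₀ (log_pos (by linarith)) (log_le_log (by linarith) (by linarith))

theorem antitoneOn_inv_natCast_mul_log_natCast_add_one :
    AntitoneOn (fun k : ℕ => ((k : ℝ) * log ((k : ℝ) + 1))⁻¹) (Set.Ici 1) :=
    fun j hj k _ hjk => by
  have hj : (1 : ℝ) ≤ j := by exact_mod_cast hj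
  have hjk : (j : ℝ) ≤ k := by exact_mod_cast hjk
  exact inv_anti₀ (mul_pos (by linarith) (log_pos (by linarith)))
    (mul_le_mul hjk (log_le_log (by linarith) (by linarith)) (log_natCast_add_one_nonneg j)
      (by linarith))

-- The divergence of `∑ 1 / (k log (k + 1))` is read off by comparison with this telescoping sum.
theorem log_log_succ_sub_le {k : ℕ} (hk : 1 ≤ k) :
    log (log ((k : ℝ) + 2)) - log (log ((k : ℝ) + 1)) ≤ ((k : ℝ) * log ((k : ℝ) + 1))⁻¹ := by
  have hk : (1 : ℝ) ≤ k := by exact_mod_cast hk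
  have ha : 0 < log ((k : ℝ) + 1) := log_pos (by linarith)
  have hb : log ((k : ℝ) + 2) - log ((k : ℝ) + 1) ≤ (k : ℝ)⁻¹ := by
    rw [← log_div (by linarith) (by linarith)]
    refine (log_le_sub_one_of_pos (by positivity)).trans ?_
    rw [div_sub_one (by linarith), inv_eq_one_div]
    gcongr <;> linarith
  rw [← log_div (log_pos (by linarith)).ne' ha.ne']
  refine (log_le_sub_one_of_pos (div_pos (log_pos (by linarith)) ha)).trans ?_
  rw [div_sub_one ha.ne']
  calc _ ≤ (k : ℝ)⁻¹ / log ((k : ℝ) + 1) := by gcongr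
    _ = _ := by rw [inv_div_left, mul_comm]

theorem tendsto_sum_Ico_inv_natCast_mul_log_atTop :
    Tendsto (fun n : ℕ => ∑ k ∈ Ico 1 n, ((k : ℝ) * log ((k : ℝ) + 1))⁻¹) atTop atTop := by
  set L : ℕ → ℝ := fun k => log (log ((k : ℝ) + 1))
  have hL : Tendsto L atTop atTop := tendsto_log_atTop.comp <| tendsto_log_atTop.comp <|
    tendsto_atTop_add_const_right _ 1 tendsto_natCast_atTop_atTop
  refine tendsto_atTop_mono' _ ?_ (tendsto_atTop_add_const_right _ (-L 1) hL)
  filter_upwards [eventually_ge_atTop 1] with n hn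
  rw [← sub_eq_add_neg, ← sum_Ico_sub L hn]
  refine sum_le_sum fun k hk => ?_
  simpa only [L, Nat.cast_add, Nat.cast_one, add_assoc, one_add_one_eq_two]
    using log_log_succ_sub_le (mem_Ico.1 hk).1

theorem abs_sum_Ico_inv_log_mul_sin_le {x t : ℝ} (hx : 0 < x) (hxt : x ≤ t) (ht : t ≤ π)
    (n : ℕ) :
    |∑ k ∈ Ico 1 n, (log ((k : ℝ) + 1))⁻¹ * Real.sin (k * t)| ≤
      2 / (log 2 * Real.sin (x / 2)) := by
  have hsin : 0 < Real.sin (x / 2) := sin_pos_of_pos_of_lt_pi (by linarith) (by linarith)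
  refine (abs_sum_Ico_mul_sin_le antitoneOn_inv_log_natCast_add_one
    (fun k _ => inv_nonneg.2 (log_natCast_add_one_nonneg k)) (by linarith)
    (by linarith [pi_pos])).trans ?_
  rw [Nat.cast_one, one_add_one_eq_two, ← div_div, div_eq_mul_inv 2]
  gcongr
  exact sin_le_sin_of_le_of_le_pi_div_two (by linarith [pi_pos]) (by linarith) (by linarith)

theorem abs_sum_Ico_inv_natCast_mul_log_mul_cos_le {m : ℕ} (hm : 1 ≤ m) (n : ℕ) :
    |∑ k ∈ Ico m n, ((k : ℝ) * log ((k : ℝ) + 1))⁻¹ * Real.cos (k * (m : ℝ)⁻¹)| ≤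
      2 * π / log 2 := by
  have hm' : (1 : ℝ) ≤ m := by exact_mod_cast hm
  have hlog : 0 < log ((m : ℝ) + 1) := log_pos (by linarith)
  -- Jordan's inequality `sin y ≥ 2 y / π` at `y = 1 / (2 m)`.
  have hsin : (π * m)⁻¹ ≤ Real.sin ((m : ℝ)⁻¹ / 2) := by
    convert mul_le_sin (x := (m : ℝ)⁻¹ / 2) (by positivity) ?_ using 1
    · field_simp
    · have : (m : ℝ)⁻¹ ≤ 1 := inv_le_one_of_one_le₀ hm'
      linarith [pi_gt_three]
  refine (abs_sum_Ico_mul_cos_le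
    (antitoneOn_inv_natCast_mul_log_natCast_add_one.mono (Set.Ici_subset_Ici.2 hm))
    (fun k _ => inv_nonneg.2 (mul_nonneg k.cast_nonneg (log_natCast_add_one_nonneg k)))
    (by positivity) (by linarith [pi_gt_three, inv_le_one_of_one_le₀ hm'])).trans ?_
  calc 2 * ((m : ℝ) * log ((m : ℝ) + 1))⁻¹ / Real.sin ((m : ℝ)⁻¹ / 2)
      ≤ 2 * ((m : ℝ) * log ((m : ℝ) + 1))⁻¹ / (π * m)⁻¹ := by gcongr
    _ = 2 * π / log ((m : ℝ) + 1) := by field_simp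
    _ ≤ 2 * π / log 2 := by gcongr; linarith

theorem sum_Ico_inv_log_div_mul_cos_sub_ge {m n : ℕ} (hm : 1 ≤ m) (hmn : m ≤ n) :
    Real.cos 1 * ∑ k ∈ Ico 1 m, ((k : ℝ) * log ((k : ℝ) + 1))⁻¹ - 2 * (π + 1) / log 2 ≤
      ∑ k ∈ Ico 1 n, (log ((k : ℝ) + 1))⁻¹ / k *
        (Real.cos (k * (m : ℝ)⁻¹) - Real.cos (k * π)) := by
  have hm' : (1 : ℝ) ≤ m := by exact_mod_cast hm
  have hhead : Real.cos 1 * ∑ k ∈ Ico 1 m, ((k : ℝ) * log ((k : ℝ) + 1))⁻¹ ≤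
      ∑ k ∈ Ico 1 m, ((k : ℝ) * log ((k : ℝ) + 1))⁻¹ * Real.cos (k * (m : ℝ)⁻¹) := by
    rw [mul_sum]
    refine sum_le_sum fun k hk => ?_
    have hkm : (k : ℝ) ≤ m := by exact_mod_cast (mem_Ico.1 hk).2.le
    have hk1 : (k : ℝ) * (m : ℝ)⁻¹ ≤ 1 := by
      rw [← div_eq_mul_inv, div_le_one (by linarith)]; exact hkm
    rw [mul_comm]
    gcongr
    · exact inv_nonneg.2 (mul_nonneg k.cast_nonneg (log_natCast_add_one_nonneg k))
    · exact cos_le_cos_of_nonneg_of_le_pi (by positivity) (by linarith [pi_gt_three]) hk1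
  have htail := abs_sum_Ico_inv_natCast_mul_log_mul_cos_le hm n
  have halt :
      |∑ k ∈ Ico 1 n, ((k : ℝ) * log ((k : ℝ) + 1))⁻¹ * Real.cos (k * π)| ≤ 2 / log 2 := by
    have := abs_sum_Ico_mul_cos_le (n := n) antitoneOn_inv_natCast_mul_log_natCast_add_one
      (fun k _ => inv_nonneg.2 (mul_nonneg k.cast_nonneg (log_natCast_add_one_nonneg k)))
      pi_pos (by linarith [pi_pos])
    rwa [Nat.cast_one, one_mul, one_add_one_eq_two, sin_pi_div_two, div_one, inv_eq_one_div,
      mul_one_div] at this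
  simp only [inv_div_left, mul_sub, sum_sub_distrib]
  rw [← sum_Ico_consecutive _ hm hmn,
    show 2 * (π + 1) / log 2 = 2 * π / log 2 + 2 / log 2 by ring]
  linarith [(abs_le.1 htail).1, (abs_le.1 halt).2]

theorem le_setIntegral_of_tendsto_sum_inv_log_mul_sin {ξ : ℝ → ℝ}
    (hξ : ∀ t, Tendsto (fun n : ℕ => ∑ k ∈ Ico 1 n, (log ((k : ℝ) + 1))⁻¹ * Real.sin (k * t))
      atTop (𝓝 (ξ t)))
    {m : ℕ} (hm : 1 ≤ m) :
    Real.cos 1 * ∑ k ∈ Ico 1 m, ((k : ℝ) * log ((k : ℝ) + 1))⁻¹ - 2 * (π + 1) / log 2 ≤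
      ∫ t in Set.Icc (m : ℝ)⁻¹ π, ξ t := by
  have hx : 0 < (m : ℝ)⁻¹ := inv_pos.2 (by exact_mod_cast hm)
  have hxπ : (m : ℝ)⁻¹ ≤ π :=
    (inv_le_one_of_one_le₀ (by exact_mod_cast hm)).trans (by linarith [pi_gt_three])
  refine ge_of_tendsto (tendsto_sum_integral_of_sin_series hxπ
    (fun n t ht => abs_sum_Ico_inv_log_mul_sin_le hx ht.1 ht.2 n) (fun t _ => hξ t)) ?_
  filter_upwards [eventually_ge_atTop m] with n hn
  exact sum_Ico_inv_log_div_mul_cos_sub_ge hm hn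

/-- (Fatou's example, non-integrability) The sum `ξ` of the everywhere convergent series
`∑_{k=1}^∞ sin(kx)/log(k+1)` is not Lebesgue integrable on `[0, π]`, and hence not on
`[-π, π]`. -/
theorem fatou_sum_not_lebesgue_integrable (ξ : ℝ → ℝ)
    (hξ : ∀ x : ℝ, Tendsto
      (fun n : ℕ => ∑ k ∈ Finset.Icc 1 n, Real.sin (k * x) / Real.log (k + 1))
      atTop (𝓝 (ξ x))) :
    ¬ IntegrableOn ξ (Set.Icc 0 π) volume ∧ ¬ IntegrableOn ξ (Set.Icc (-π) π) volume := by
  have hξ' : ∀ t, Tendsto (fun n : ℕ => ∑ k ∈ Ico 1 n, (log ((k : ℝ) + 1))⁻¹ * Real.sin (k * t))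
      atTop (𝓝 (ξ t)) := fun t => by
    rw [← tendsto_add_atTop_iff_nat 1]
    simpa only [Ico_add_one_right_eq_Icc, inv_mul_eq_div] using hξ t
  have hnot : ¬ IntegrableOn ξ (Set.Icc 0 π) volume := by
    intro h
    obtain ⟨m, hm, hlarge⟩ : ∃ m : ℕ, 1 ≤ m ∧
        (∫ t in Set.Icc 0 π, |ξ t|) + 2 * (π + 1) / log 2 <
          Real.cos 1 * ∑ k ∈ Ico 1 m, ((k : ℝ) * log ((k : ℝ) + 1))⁻¹ :=
      ((eventually_ge_atTop 1).and ((tendsto_sum_Ico_inv_natCast_mul_log_atTop.const_mul_atTop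
        cos_one_pos).eventually_gt_atTop _)).exists
    have hbound : ∫ t in Set.Icc (m : ℝ)⁻¹ π, ξ t ≤ ∫ t in Set.Icc 0 π, |ξ t| :=
      (le_abs_self _).trans <| abs_integral_le_integral_abs.trans <|
        setIntegral_mono_set h.abs (.of_forall fun _ => abs_nonneg _)
          (Set.Icc_subset_Icc (by positivity) le_rfl).eventuallyLE
    linarith [le_setIntegral_of_tendsto_sum_inv_log_mul_sin hξ' hm]
  exact ⟨hnot, fun h => hnot (h.mono_set (Set.Icc_subset_Icc (by linarith [pi_pos]) le_rfl))⟩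
end

section
/- Let (b_k) be a strictly decreasing sequence of positive reals with b_k \to 0 and \sum_{k=1}^\infty b_k/k = \infty. Then the series \sum_{k=1}^\infty b_k sin(kx) converges for every real x, and its sum function is not Lebesgue integrable on [0, \pi]. -/
open Filter Topology Finset Real MeasureTheory

/-!
The partial sums of `sin (k x)` and `cos (k x)` over any block of indices are real and imaginary
parts of a geometric sum of `exp (i x)`, hence bounded by `1 / |sin (x / 2)|`. Abel summation
against the decreasing `b k` then gives convergence of the series, and a bound `b 1 / sin (x / 2)`
on its partial sums over `[x, π]` for every `x > 0`.

If the sum `f` were integrable on `[0, π]`, dominated convergence on `[x, π]` would give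
`∫ t in x..π, f t = ∑ (b k / k) (cos (k x) - cos (k π))`. For `x = 1 / m` the terms with `k ≤ m`
have `cos (k x) ≥ 1 / 2`, while the tail `k > m` and the alternating part `∑ (b k / k) cos (k π)`
are `O(b 1)` by Abel summation again. So `∫ |f| ≥ (∑_{k ≤ m} b k / k) / 2 - O(b 1)` for all `m`,
contradicting the divergence of `∑ b k / k`.
-/

theorem norm_sum_Ico_exp_I_mul_pow_le {x : ℝ} (hx : sin (x / 2) ≠ 0) (m n : ℕ) :
    ‖∑ k ∈ Ico m n, Complex.exp (Complex.I * x) ^ k‖ ≤ 1 / |sin (x / 2)| := by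
  set z := Complex.exp (Complex.I * x)
  have hz1 : ‖z - 1‖ = 2 * |sin (x / 2)| := by
    simp [z, Complex.norm_exp_I_mul_ofReal_sub_one]
  have hz : ‖z‖ = 1 := by
    rw [show z = Complex.exp (x * Complex.I) by rw [mul_comm]]
    exact Complex.norm_exp_ofReal_mul_I x
  have hpos : 0 < |sin (x / 2)| := abs_pos.mpr hx
  rcases le_total n m with hnm | hmn
  · rw [Ico_eq_empty_of_le hnm, sum_empty, norm_zero]; positivity
  have hne : z ≠ 1 := fun h ↦ by simp [h] at hz1; exact hx hz1
  rw [geom_sum_Ico hne hmn, norm_div, hz1, div_le_div_iff₀ (by positivity) hpos]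
  calc ‖z ^ n - z ^ m‖ * |sin (x / 2)| ≤ (‖z ^ n‖ + ‖z ^ m‖) * |sin (x / 2)| := by
        gcongr; exact norm_sub_le _ _
    _ = 1 * (2 * |sin (x / 2)|) := by rw [norm_pow, norm_pow, hz, one_pow]; ring

theorem cos_nat_mul_eq_re (x : ℝ) (k : ℕ) :
    cos (k * x) = (Complex.exp (Complex.I * x) ^ k).re := by
  rw [← Complex.exp_nat_mul, show (k : ℂ) * (Complex.I * x) = ((k * x : ℝ) : ℂ) * Complex.I by
    push_cast; ring, Complex.exp_ofReal_mul_I_re]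

theorem sin_nat_mul_eq_im (x : ℝ) (k : ℕ) :
    sin (k * x) = (Complex.exp (Complex.I * x) ^ k).im := by
  rw [← Complex.exp_nat_mul, show (k : ℂ) * (Complex.I * x) = ((k * x : ℝ) : ℂ) * Complex.I by
    push_cast; ring, Complex.exp_ofReal_mul_I_im]

theorem abs_sum_Ico_cos_nat_mul_le {x : ℝ} (hx : sin (x / 2) ≠ 0) (m n : ℕ) :
    |∑ k ∈ Ico m n, cos (k * x)| ≤ 1 / |sin (x / 2)| := by
  simp_rw [cos_nat_mul_eq_re, ← Complex.re_sum]
  exact (Complex.abs_re_le_norm _).trans (norm_sum_Ico_exp_I_mul_pow_le hx m n)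

theorem abs_sum_Ico_sin_nat_mul_le {x : ℝ} (hx : sin (x / 2) ≠ 0) (m n : ℕ) :
    |∑ k ∈ Ico m n, sin (k * x)| ≤ 1 / |sin (x / 2)| := by
  simp_rw [sin_nat_mul_eq_im, ← Complex.im_sum]
  exact (Complex.abs_im_le_norm _).trans (norm_sum_Ico_exp_I_mul_pow_le hx m n)

theorem norm_sum_Ico_smul_le_of_antitoneOn_s7 {E : Type*} [SeminormedAddCommGroup E]
    [NormedSpace ℝ E] {a : ℕ → ℝ} {c : ℕ → E} {m : ℕ} {M : ℝ} (ha : AntitoneOn a (Set.Ici m))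
    (ha0 : ∀ k, m ≤ k → 0 ≤ a k) (hc : ∀ n, ‖∑ k ∈ Ico m n, c k‖ ≤ M) (n : ℕ) :
    ‖∑ k ∈ Ico m n, a k • c k‖ ≤ a m * M := by
  rcases lt_or_ge n m with hnm | hmn
  · rw [Ico_eq_empty_of_le hnm.le, sum_empty, norm_zero]
    exact mul_nonneg (ha0 m le_rfl) (by simpa using hc m)
  -- Abel summation: the error of replacing `a k` by `a n` is controlled by the total drop of `a`.
  have key : ∀ n, m ≤ n →
      ‖∑ k ∈ Ico m n, a k • c k - a n • ∑ k ∈ Ico m n, c k‖ ≤ (a m - a n) * M := by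
    intro n hn
    induction n, hn using Nat.le_induction with
    | base => simp
    | succ n hn ih =>
      have hdrop : 0 ≤ a n - a (n + 1) :=
        sub_nonneg.mpr (ha hn (Set.mem_Ici.mpr (by omega)) (by omega))
      have hstep : ∑ k ∈ Ico m (n + 1), a k • c k - a (n + 1) • ∑ k ∈ Ico m (n + 1), c k
          = (∑ k ∈ Ico m n, a k • c k - a n • ∑ k ∈ Ico m n, c k)
            + (a n - a (n + 1)) • ∑ k ∈ Ico m (n + 1), c k := by
        simp only [sum_Ico_succ_top hn]; module
      rw [hstep]
      calc _ ≤ (a m - a n) * M + (a n - a (n + 1)) * M := by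
            grw [norm_add_le, ih, norm_smul, Real.norm_of_nonneg hdrop, hc]
        _ = (a m - a (n + 1)) * M := by ring
  calc ‖∑ k ∈ Ico m n, a k • c k‖
      ≤ ‖∑ k ∈ Ico m n, a k • c k - a n • ∑ k ∈ Ico m n, c k‖
        + ‖a n • ∑ k ∈ Ico m n, c k‖ := norm_le_norm_sub_add _ _
    _ ≤ (a m - a n) * M + a n * M := by
        grw [key n hmn, norm_smul, Real.norm_of_nonneg (ha0 n hmn)]
        exact add_le_add_right (mul_le_mul_of_nonneg_left (hc n) (ha0 n hmn)) _
    _ = a m * M := by ring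

theorem abs_sum_Ico_mul_cos_le_s7 {a : ℕ → ℝ} {m : ℕ} (ha : AntitoneOn a (Set.Ici m))
    (ha0 : ∀ k, m ≤ k → 0 ≤ a k) {x : ℝ} (hx : sin (x / 2) ≠ 0) (n : ℕ) :
    |∑ k ∈ Ico m n, a k * cos (k * x)| ≤ a m / |sin (x / 2)| := by
  simpa only [smul_eq_mul, Real.norm_eq_abs, mul_one_div] using
    norm_sum_Ico_smul_le_of_antitoneOn_s7 (c := fun k ↦ cos (k * x)) ha ha0
      (abs_sum_Ico_cos_nat_mul_le hx m) n

theorem abs_sum_Ico_mul_sin_le_s7 {a : ℕ → ℝ} {m : ℕ} (ha : AntitoneOn a (Set.Ici m))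
    (ha0 : ∀ k, m ≤ k → 0 ≤ a k) {x : ℝ} (hx : sin (x / 2) ≠ 0) (n : ℕ) :
    |∑ k ∈ Ico m n, a k * sin (k * x)| ≤ a m / |sin (x / 2)| := by
  simpa only [smul_eq_mul, Real.norm_eq_abs, mul_one_div] using
    norm_sum_Ico_smul_le_of_antitoneOn_s7 (c := fun k ↦ sin (k * x)) ha ha0
      (abs_sum_Ico_sin_nat_mul_le hx m) n

theorem sum_Icc_sub_sum_Icc {M : Type*} [AddCommGroup M] (f : ℕ → M) {m n : ℕ} (hmn : m ≤ n) :
    ∑ k ∈ Icc 1 n, f k - ∑ k ∈ Icc 1 m, f k = ∑ k ∈ Ico (m + 1) (n + 1), f k := by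
  rw [← Ico_add_one_right_eq_Icc, ← Ico_add_one_right_eq_Icc,
    ← sum_Ico_consecutive f (by omega : 1 ≤ m + 1) (by omega : m + 1 ≤ n + 1), add_sub_cancel_left]

theorem integral_sin_mul (c u v : ℝ) :
    ∫ t in u..v, sin (c * t) = (cos (c * u) - cos (c * v)) / c := by
  rcases eq_or_ne c 0 with rfl | hc
  · simp
  rw [intervalIntegral.integral_comp_mul_left (fun t ↦ sin t) hc, integral_sin, smul_eq_mul,
    inv_mul_eq_div]

theorem integral_sum_mul_sin (b : ℕ → ℝ) (s : Finset ℕ) (u v : ℝ) :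
    ∫ t in u..v, ∑ k ∈ s, b k * sin (k * t) = ∑ k ∈ s, b k / k * (cos (k * u) - cos (k * v)) := by
  rw [intervalIntegral.integral_finsetSum fun k _ ↦
    (by fun_prop : Continuous _).intervalIntegrable u v]
  refine sum_congr rfl fun k _ ↦ ?_
  rw [intervalIntegral.integral_const_mul, integral_sin_mul]
  ring

theorem intervalIntegral_le_setIntegral_abs {f : ℝ → ℝ} {s : Set ℝ} {u v : ℝ} (huv : u ≤ v)
    (hs : Set.Ioc u v ⊆ s) (hf : IntegrableOn f s) : ∫ t in u..v, f t ≤ ∫ t in s, |f t| := by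
  rw [intervalIntegral.integral_of_le huv]
  calc ∫ t in Set.Ioc u v, f t ≤ ∫ t in Set.Ioc u v, |f t| :=
        integral_mono (hf.mono_set hs) (hf.mono_set hs).abs fun t ↦ le_abs_self (f t)
    _ ≤ ∫ t in s, |f t| :=
        setIntegral_mono_set hf.abs (ae_of_all _ fun t ↦ abs_nonneg (f t)) hs.eventuallyLE

section SineSeries

variable {b : ℕ → ℝ} (hb : AntitoneOn b (Set.Ici 1)) (hb0 : ∀ k, 1 ≤ k → 0 ≤ b k)
include hb hb0

theorem abs_sum_Icc_mul_sin_le {x : ℝ} (hx : sin (x / 2) ≠ 0) (n : ℕ) :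
    |∑ k ∈ Icc 1 n, b k * sin (k * x)| ≤ b 1 / |sin (x / 2)| := by
  rw [← Ico_add_one_right_eq_Icc]
  exact abs_sum_Ico_mul_sin_le_s7 hb hb0 hx _

theorem exists_tendsto_sum_Icc_mul_sin (hlim : Tendsto b atTop (𝓝 0)) (x : ℝ) :
    ∃ L, Tendsto (fun n ↦ ∑ k ∈ Icc 1 n, b k * sin (k * x)) atTop (𝓝 L) := by
  by_cases hx : sin (x / 2) = 0
  · obtain ⟨j, hj⟩ := Real.sin_eq_zero_iff.mp hx
    have hzero : ∀ k : ℕ, sin (k * x) = 0 := fun k ↦ by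
      rw [show x = 2 * (j * π) by linarith,
        show (k : ℝ) * (2 * (j * π)) = ((2 * k * j : ℤ) : ℝ) * π by push_cast; ring,
        sin_int_mul_pi]
    exact ⟨0, by simp [hzero]⟩
  refine cauchySeq_tendsto_of_complete <|
    cauchySeq_of_le_tendsto_0' (fun N ↦ b (N + 1) / |sin (x / 2)|) (fun p q hpq ↦ ?_) ?_
  · rw [dist_comm, Real.dist_eq, sum_Icc_sub_sum_Icc _ hpq]
    exact abs_sum_Ico_mul_sin_le_s7 (hb.mono (Set.Ici_subset_Ici.mpr (by omega)))
      (fun k hk ↦ hb0 k (by omega)) hx _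
  · simpa using (hlim.comp (tendsto_add_atTop_nat 1)).div_const |sin (x / 2)|

theorem tendsto_sum_Icc_div_mul_cos_sub {f : ℝ → ℝ} {x : ℝ} (hx0 : 0 < x) (hxπ : x ≤ π)
    (hf : ∀ t ∈ Set.Ioc x π,
      Tendsto (fun n ↦ ∑ k ∈ Icc 1 n, b k * sin (k * t)) atTop (𝓝 (f t))) :
    Tendsto (fun n ↦ ∑ k ∈ Icc 1 n, b k / k * (cos (k * x) - cos (k * π))) atTop
      (𝓝 (∫ t in x..π, f t)) := by
  have hsx : 0 < sin (x / 2) := sin_pos_of_pos_of_lt_pi (by linarith) (by linarith [pi_pos])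
  simp_rw [← integral_sum_mul_sin]
  refine intervalIntegral.tendsto_integral_filter_of_dominated_convergence
    (fun _ ↦ b 1 / sin (x / 2))
    (Eventually.of_forall fun n ↦ (by fun_prop : Continuous _).aestronglyMeasurable)
    (Eventually.of_forall fun n ↦ ae_of_all _ fun t ht ↦ ?_) intervalIntegrable_const
    (ae_of_all _ fun t ht ↦ hf t (Set.uIoc_of_le hxπ ▸ ht))
  rw [Set.uIoc_of_le hxπ] at ht
  have hst : sin (x / 2) ≤ sin (t / 2) :=
    sin_le_sin_of_le_of_le_pi_div_two (by linarith [pi_pos]) (by linarith [ht.2])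
      (by linarith [ht.1])
  calc ‖∑ k ∈ Icc 1 n, b k * sin (k * t)‖ ≤ b 1 / |sin (t / 2)| :=
        abs_sum_Icc_mul_sin_le hb hb0 (hsx.trans_le hst).ne' n
    _ ≤ b 1 / sin (x / 2) := by
        rw [abs_of_pos (hsx.trans_le hst)]; gcongr; exact hb0 1 le_rfl

theorem sum_Icc_div_mul_cos_sub_ge {m n : ℕ} (hm : 1 ≤ m) (hmn : m ≤ n) :
    (∑ k ∈ Icc 1 m, b k / k) / 2 - (π + 1) * b 1 ≤
      ∑ k ∈ Icc 1 n, b k / k * (cos (k * (m : ℝ)⁻¹) - cos (k * π)) := by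
  set x := (m : ℝ)⁻¹
  have hmR : (1 : ℝ) ≤ m := by exact_mod_cast hm
  have ha : AntitoneOn (fun k : ℕ ↦ b k / k) (Set.Ici 1) := fun j hj k hk hjk ↦
    div_le_div₀ (hb0 j hj) (hb hj hk hjk) (Nat.cast_pos.mpr hj) (by exact_mod_cast hjk)
  have ha0 : ∀ k, 1 ≤ k → 0 ≤ b k / k := fun k hk ↦ div_nonneg (hb0 k hk) k.cast_nonneg
  have head : (∑ k ∈ Icc 1 m, b k / k) / 2 ≤ ∑ k ∈ Icc 1 m, b k / k * cos (k * x) := by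
    rw [sum_div]
    refine sum_le_sum fun k hk ↦ ?_
    have hkx : (k : ℝ) * x ≤ 1 := by
      rw [← div_eq_mul_inv, div_le_one (by positivity)]; exact_mod_cast (mem_Icc.mp hk).2
    have hcos : 1 / 2 ≤ cos (k * x) := by
      nlinarith [one_sub_sq_div_two_le_cos (x := k * x), show 0 ≤ (k : ℝ) * x by positivity]
    nlinarith [ha0 k (mem_Icc.mp hk).1]
  -- Jordan's inequality `sin y ≥ 2 y / π` gives `sin (x / 2) ≥ 1 / (π m)`
  have hsx : 1 / (π * m) ≤ sin (x / 2) := by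
    have := mul_le_sin (x := x / 2) (by positivity) (by
      have : x ≤ 1 := inv_le_one_of_one_le₀ hmR
      linarith [pi_gt_three])
    calc 1 / (π * m) = 2 / π * (x / 2) := by simp only [x]; field_simp
      _ ≤ _ := this
  have hsx_pos : 0 < sin (x / 2) := (by positivity : 0 < 1 / (π * m)).trans_le hsx
  have tail : |∑ k ∈ Ico (m + 1) (n + 1), b k / k * cos (k * x)| ≤ π * b 1 := by
    calc _ ≤ b (m + 1) / (m + 1 : ℕ) / |sin (x / 2)| :=
          abs_sum_Ico_mul_cos_le_s7 (ha.mono (Set.Ici_subset_Ici.mpr (by omega)))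
            (fun k hk ↦ ha0 k (by omega)) hsx_pos.ne' _
      _ ≤ b 1 / m / (1 / (π * m)) := by
          have hbm : b (m + 1) / (m + 1 : ℕ) ≤ b 1 / m :=
            div_le_div₀ (hb0 1 le_rfl) (hb (Set.mem_Ici.mpr le_rfl) (Set.mem_Ici.mpr (by omega))
              (by omega)) (by positivity) (by push_cast; linarith)
          rw [abs_of_pos hsx_pos]
          exact div_le_div₀ (div_nonneg (hb0 1 le_rfl) m.cast_nonneg) hbm (by positivity) hsx
      _ = π * b 1 := by field_simp
  have alt : |∑ k ∈ Icc 1 n, b k / k * cos (k * π)| ≤ b 1 := by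
    rw [← Ico_add_one_right_eq_Icc]
    simpa [sin_pi_div_two] using abs_sum_Ico_mul_cos_le_s7 ha ha0 (x := π) (by simp) (n + 1)
  have hsplit : ∑ k ∈ Icc 1 n, b k / k * (cos (k * x) - cos (k * π)) =
      ∑ k ∈ Icc 1 m, b k / k * cos (k * x) + ∑ k ∈ Ico (m + 1) (n + 1), b k / k * cos (k * x)
        - ∑ k ∈ Icc 1 n, b k / k * cos (k * π) := by
    rw [← sum_Icc_sub_sum_Icc _ hmn]
    simp only [mul_sub, sum_sub_distrib]
    ring
  rw [hsplit]
  linarith [abs_le.mp tail, abs_le.mp alt]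

end SineSeries

/-- If `(b_k)` is a strictly decreasing sequence of positive reals tending to `0`
with `∑ b_k / k = ∞`, then `∑ b_k sin(kx)` converges for every real `x`, and the sum
function is not Lebesgue integrable on `[0, π]`. -/
theorem sine_series_sum_not_integrable (b : ℕ → ℝ)
    (hpos : ∀ k : ℕ, 1 ≤ k → 0 < b k)
    (hdec : ∀ j k : ℕ, 1 ≤ j → j < k → b k < b j)
    (hlim : Tendsto b atTop (𝓝 0))
    (hdiv : Tendsto (fun n : ℕ => ∑ k ∈ Finset.Icc 1 n, b k / k) atTop atTop) :
    (∀ x : ℝ, ∃ L : ℝ, Tendsto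
        (fun n : ℕ => ∑ k ∈ Finset.Icc 1 n, b k * Real.sin (k * x)) atTop (𝓝 L)) ∧
    (∀ f : ℝ → ℝ,
      (∀ x : ℝ, Tendsto
        (fun n : ℕ => ∑ k ∈ Finset.Icc 1 n, b k * Real.sin (k * x)) atTop (𝓝 (f x))) →
      ¬ IntegrableOn f (Set.Icc 0 π) volume) := by
  have hb : AntitoneOn b (Set.Ici 1) := fun j hj k _ hjk ↦
    hjk.eq_or_lt.elim (fun h ↦ h ▸ le_rfl) fun h ↦ (hdec j k hj h).le
  have hb0 : ∀ k, 1 ≤ k → 0 ≤ b k := fun k hk ↦ (hpos k hk).le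
  refine ⟨exists_tendsto_sum_Icc_mul_sin hb hb0 hlim, fun f hf hfi ↦ ?_⟩
  set C := 2 * ((∫ t in Set.Icc 0 π, |f t|) + (π + 1) * b 1)
  have hbdd : ∀ m, 1 ≤ m → ∑ k ∈ Icc 1 m, b k / k ≤ C := by
    intro m hm
    have hx0 : 0 < (m : ℝ)⁻¹ := by positivity
    have hxπ : (m : ℝ)⁻¹ ≤ π :=
      (inv_le_one_of_one_le₀ (by exact_mod_cast hm)).trans (by linarith [pi_gt_three])
    have hlower := ge_of_tendsto (tendsto_sum_Icc_div_mul_cos_sub hb hb0 hx0 hxπ fun t _ ↦ hf t)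
      ((eventually_ge_atTop m).mono fun n hn ↦ sum_Icc_div_mul_cos_sub_ge hb hb0 hm hn)
    have hupper := intervalIntegral_le_setIntegral_abs hxπ
      (Set.Ioc_subset_Icc_self.trans (Set.Icc_subset_Icc_left hx0.le)) hfi
    linarith
  obtain ⟨m, hmC, hm⟩ := ((hdiv.eventually_gt_atTop C).and (eventually_ge_atTop 1)).exists
  exact (hbdd m hm).not_gt hmC
end

section
/- (Riemann) Suppose the trigonometric series a_0/2 + \sum_{k=1}^\infty (a_k cos kx + b_k sin kx) converges at every real x to f(x), and let F(x) = (a_0/4) x^2 - \sum_{k=1}^\infty (a_k cos kx + b_k sin kx)/k^2 be the sum of the twice formally integrated series. Then at every real x the Schwarz (second symmetric) derivative of F exists and equals f(x): lim_{h \to 0} (F(x+h) + F(x-h) - 2F(x))/h^2 = f(x). -/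
/-!
Termwise, the second symmetric difference of the twice integrated series is
`(F(x+h) + F(x-h) - 2 F(x)) / h² = a₀/2 + ∑ₖ (aₖ cos kx + bₖ sin kx) · sinc(kh/2)²`,
so it sums the series at `x` by the method with kernel `ψ_h(k) = sinc(kh/2)²`. Summation by
parts shows that such a method sums every convergent series to its sum as soon as `ψ_h(k) → 1`
for each `k` and the variations `∑ₖ |ψ_h(k+1) - ψ_h(k)|` stay bounded as `h → 0`. The bound on
the variations comes from `|(sinc²)'(t)| ≤ 2`, used for `k ≤ 1/H`, and `|(sinc²)'(t)| ≤ 4/t²`,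
used for `k > 1/H`, where `H = |h|/2`.
-/

open Filter Topology Finset Real

theorem sum_range_succ_eq_add_sum_Icc {M : Type*} [AddCommMonoid M] (g : ℕ → M) (n : ℕ) :
    ∑ k ∈ range (n + 1), g k = g 0 + ∑ k ∈ Icc 1 n, g k := by
  rw [range_eq_Ico, sum_eq_sum_Ico_succ_bot n.succ_pos]
  rfl

theorem sum_range_mul_eq_summation_by_parts (u ψ : ℕ → ℝ) (s : ℝ) (n : ℕ) :
    ∑ k ∈ range n, u k * ψ k = s * ψ 0 - (s - ∑ k ∈ range n, u k) * ψ n +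
      ∑ k ∈ range n, (s - ∑ j ∈ range (k + 1), u j) * (ψ (k + 1) - ψ k) := by
  induction n with
  | zero => simp
  | succ n ih =>
    rw [sum_range_succ (fun k => u k * ψ k), ih, sum_range_succ (fun k => _ * (ψ (k + 1) - ψ k)),
      sum_range_succ u n]
    ring

theorem tendsto_tsum_mul_of_tendsto_zero {α : Type*} {l : Filter α} {r : ℕ → ℝ}
    (hr : Tendsto r atTop (𝓝 0)) {Δ : α → ℕ → ℝ} (hΔ : ∀ k, Tendsto (fun i => Δ i k) l (𝓝 0))
    {C : ℝ} (hC : ∀ᶠ i in l, ∀ n, ∑ k ∈ range n, |Δ i k| ≤ C) :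
    Tendsto (fun i => ∑' k, r k * Δ i k) l (𝓝 0) := by
  rw [Metric.tendsto_nhds]
  intro ε hε
  set δ := ε / (2 * (|C| + 1))
  have hδ : 0 < δ := by positivity
  have hδC : δ * C ≤ ε / 2 := by
    calc δ * C ≤ δ * (|C| + 1) := by gcongr; linarith [le_abs_self C]
      _ = ε / 2 := by simp only [δ]; field_simp
  obtain ⟨N, hN⟩ := (Metric.tendsto_atTop.mp hr) δ hδ
  have hhead : Tendsto (fun i => ∑ k ∈ range N, |r k * Δ i k|) l (𝓝 0) := by
    simpa using tendsto_finsetSum (range N) fun k _ => ((hΔ k).const_mul (r k)).abs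
  filter_upwards [hC, hhead.eventually (gt_mem_nhds (half_pos hε))] with i hCi hheadi
  have hsplit : ∀ n, ∑ k ∈ range n, |r k * Δ i k| ≤ ∑ k ∈ range N, |r k * Δ i k| + δ * C := by
    intro n
    calc ∑ k ∈ range n, |r k * Δ i k|
        ≤ ∑ k ∈ range n, ((if k < N then |r k * Δ i k| else 0) + δ * |Δ i k|) := by
          refine sum_le_sum fun k _ => ?_
          split_ifs with hk
          · exact le_add_of_nonneg_right (by positivity)
          · rw [zero_add, abs_mul]
            have := hN k (not_lt.mp hk)
            rw [Real.dist_eq, sub_zero] at this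
            exact mul_le_mul_of_nonneg_right this.le (abs_nonneg _)
      _ = ∑ k ∈ (range n).filter (· < N), |r k * Δ i k| + δ * ∑ k ∈ range n, |Δ i k| := by
          rw [sum_add_distrib, sum_filter, mul_sum]
      _ ≤ ∑ k ∈ range N, |r k * Δ i k| + δ * C := by
          gcongr
          · intro k hk
            simp only [mem_filter, mem_range] at hk ⊢
            exact hk.2
          · exact hCi n
  have hsum : Summable fun k => ‖r k * Δ i k‖ :=
    summable_of_sum_range_le (fun _ => abs_nonneg _) hsplit
  calc dist (∑' k, r k * Δ i k) 0 ≤ ∑' k, |r k * Δ i k| := by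
        rw [dist_zero_right]
        exact norm_tsum_le_tsum_norm hsum
    _ ≤ ∑ k ∈ range N, |r k * Δ i k| + δ * C :=
        Real.tsum_le_of_sum_range_le (fun _ => abs_nonneg _) hsplit
    _ < ε := by linarith

theorem tendsto_sum_range_mul_of_sum_abs_sub_le {u ψ : ℕ → ℝ} {s C : ℝ}
    (hu : Tendsto (fun n => ∑ k ∈ range n, u k) atTop (𝓝 s))
    (hψ : ∀ n, ∑ k ∈ range n, |ψ (k + 1) - ψ k| ≤ C) :
    Tendsto (fun n => ∑ k ∈ range n, u k * ψ k) atTop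
      (𝓝 (s * ψ 0 + ∑' k, (s - ∑ j ∈ range (k + 1), u j) * (ψ (k + 1) - ψ k))) := by
  set r : ℕ → ℝ := fun n => s - ∑ k ∈ range n, u k
  have hr : Tendsto r atTop (𝓝 0) := by simpa using (tendsto_const_nhds (x := s)).sub hu
  have hψ_bdd : ∀ n, ‖ψ n‖ ≤ |ψ 0| + C := fun n =>
    calc |ψ n| ≤ |ψ 0| + |ψ n - ψ 0| := by
          simpa using abs_add_le (ψ 0) (ψ n - ψ 0)
      _ ≤ |ψ 0| + C := by
          rw [← sum_range_sub]
          exact add_le_add_right ((abs_sum_le_sum_abs _ _).trans (hψ n)) _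
  obtain ⟨B, hB⟩ := hr.norm.bddAbove_range
  have hsum : Summable fun k => r (k + 1) * (ψ (k + 1) - ψ k) := by
    refine Summable.of_norm_bounded
      ((summable_of_sum_range_le (fun _ => abs_nonneg _) hψ).mul_left B) fun k => ?_
    rw [norm_mul]
    exact mul_le_mul_of_nonneg_right (hB ⟨k + 1, rfl⟩) (norm_nonneg _)
  have hboundary : Tendsto (fun n => r n * ψ n) atTop (𝓝 0) :=
    hr.zero_mul_isBoundedUnder_le (isBoundedUnder_of ⟨_, hψ_bdd⟩)
  simpa [sum_range_mul_eq_summation_by_parts u ψ s] using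
    (tendsto_const_nhds.sub hboundary).add hsum.hasSum.tendsto_sum_nat

theorem tendsto_of_tendsto_sum_range_mul {α : Type*} {l : Filter α} {u : ℕ → ℝ} {s : ℝ}
    (hu : Tendsto (fun n => ∑ k ∈ range n, u k) atTop (𝓝 s)) {ψ : α → ℕ → ℝ}
    (hψ : ∀ k, Tendsto (fun i => ψ i k) l (𝓝 1)) {C : ℝ}
    (hvar : ∀ᶠ i in l, ∀ n, ∑ k ∈ range n, |ψ i (k + 1) - ψ i k| ≤ C) {g : α → ℝ}
    (hg : ∀ᶠ i in l, Tendsto (fun n => ∑ k ∈ range n, u k * ψ i k) atTop (𝓝 (g i))) :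
    Tendsto g l (𝓝 s) := by
  have hr : Tendsto (fun k => s - ∑ j ∈ range (k + 1), u j) atTop (𝓝 0) := by
    simpa using (tendsto_const_nhds (x := s)).sub ((tendsto_add_atTop_iff_nat 1).2 hu)
  have hg_eq : ∀ᶠ i in l,
      s * ψ i 0 + ∑' k, (s - ∑ j ∈ range (k + 1), u j) * (ψ i (k + 1) - ψ i k) = g i := by
    filter_upwards [hvar, hg] with i hvari hgi
    exact tendsto_nhds_unique (tendsto_sum_range_mul_of_sum_abs_sub_le hu hvari) hgi
  have hΔ : ∀ k, Tendsto (fun i => ψ i (k + 1) - ψ i k) l (𝓝 0) := fun k => by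
    simpa using (hψ (k + 1)).sub (hψ k)
  simpa using ((tendsto_const_nhds.mul (hψ 0)).add
    (tendsto_tsum_mul_of_tendsto_zero hr hΔ hvar)).congr' hg_eq

namespace Real

theorem hasDerivAt_sinc_sq {x : ℝ} (hx : x ≠ 0) :
    HasDerivAt (fun t => sinc t ^ 2) (2 * sinc x * ((x * cos x - sin x) / x ^ 2)) x := by
  have hsinc : (fun t => sin t / t) =ᶠ[𝓝 x] sinc :=
    (eventually_ne_nhds hx).mono fun t ht => (sinc_of_ne_zero ht).symm
  refine ((((hasDerivAt_sin x).div (hasDerivAt_id x) hx).congr_of_eventuallyEq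
    hsinc.symm).fun_pow 2).congr_deriv ?_
  simp only [sinc_of_ne_zero hx, id]
  ring

theorem abs_mul_cos_sub_sin_le {x : ℝ} (hx : 0 ≤ x) : |x * cos x - sin x| ≤ x ^ 2 := by
  have hderiv : ∀ t ∈ Set.Icc 0 x,
      HasDerivWithinAt (fun t => t * cos t - sin t) (-(t * sin t)) (Set.Icc 0 x) t := by
    intro t _
    exact ((((hasDerivAt_id' t).fun_mul (hasDerivAt_cos t)).fun_sub
      (hasDerivAt_sin t)).congr_deriv (by ring)).hasDerivWithinAt
  have hbound : ∀ t ∈ Set.Ico 0 x, ‖-(t * sin t)‖ ≤ x := by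
    intro t ht
    rw [norm_neg, norm_mul, Real.norm_of_nonneg ht.1, Real.norm_eq_abs]
    calc t * |sin t| ≤ t * 1 := by gcongr; exacts [ht.1, abs_sin_le_one t]
      _ ≤ x := by linarith [ht.2]
  simpa [sq] using norm_image_sub_le_of_norm_deriv_le_segment' hderiv hbound x ⟨hx, le_rfl⟩

theorem abs_deriv_sinc_sq_le {x : ℝ} (hx : 0 < x) :
    |2 * sinc x * ((x * cos x - sin x) / x ^ 2)| ≤ 2 := by
  rw [abs_mul, abs_mul, abs_two, abs_div, abs_of_pos (by positivity : 0 < x ^ 2)]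
  have h1 := abs_sinc_le_one x
  have h2 : |x * cos x - sin x| / x ^ 2 ≤ 1 :=
    (div_le_one (by positivity)).mpr (abs_mul_cos_sub_sin_le hx.le)
  calc 2 * |sinc x| * (|x * cos x - sin x| / x ^ 2) ≤ 2 * 1 * 1 := by gcongr
    _ = 2 := by norm_num

theorem abs_deriv_sinc_sq_le_of_one_le {x : ℝ} (hx : 1 ≤ x) :
    |2 * sinc x * ((x * cos x - sin x) / x ^ 2)| ≤ 4 / x ^ 2 := by
  have hx0 : 0 < x := by linarith
  rw [abs_mul, abs_mul, abs_two, abs_div, abs_of_pos (by positivity : 0 < x ^ 2),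
    sinc_of_ne_zero hx0.ne', abs_div, abs_of_pos hx0]
  have h1 : |sin x| / x ≤ 1 / x := by gcongr; exact abs_sin_le_one x
  have h2 : |x * cos x - sin x| ≤ 2 * x :=
    calc |x * cos x - sin x| ≤ |x * cos x| + |sin x| := abs_sub _ _
      _ ≤ x * 1 + 1 := by
          rw [abs_mul, abs_of_pos hx0]
          gcongr
          exacts [abs_cos_le_one x, abs_sin_le_one x]
      _ ≤ 2 * x := by linarith
  calc 2 * (|sin x| / x) * (|x * cos x - sin x| / x ^ 2) ≤ 2 * (1 / x) * (2 * x / x ^ 2) := by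
        gcongr
    _ = 4 / x ^ 2 := by field_simp; ring

theorem abs_sinc_sq_sub_le_of_abs_deriv_le {s t C : ℝ} (hs : 0 ≤ s) (hst : s ≤ t)
    (hC : ∀ x ∈ Set.Ioo s t, |2 * sinc x * ((x * cos x - sin x) / x ^ 2)| ≤ C) :
    |sinc t ^ 2 - sinc s ^ 2| ≤ C * (t - s) := by
  rcases hst.eq_or_lt with rfl | hlt
  · simp
  obtain ⟨c, hc, hslope⟩ := exists_hasDerivAt_eq_slope (fun t => sinc t ^ 2) _ hlt
    (continuous_sinc.pow 2).continuousOn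
    fun x hx => hasDerivAt_sinc_sq (hs.trans_lt hx.1).ne'
  rw [eq_div_iff (sub_pos.mpr hlt).ne'] at hslope
  rw [← hslope, abs_mul, abs_of_pos (sub_pos.mpr hlt)]
  exact mul_le_mul_of_nonneg_right (hC c hc) (sub_pos.mpr hlt).le

theorem sum_abs_sinc_sq_sub_le {H : ℝ} (hH : H ≠ 0) (hH1 : |H| ≤ 1) (n : ℕ) :
    ∑ k ∈ range n, |sinc ((k + 1) * H) ^ 2 - sinc (k * H) ^ 2| ≤ 12 := by
  wlog hpos : 0 < H generalizing H
  · simpa [mul_neg, sinc_neg] using this (neg_ne_zero.2 hH) (by rwa [abs_neg])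
      (by linarith [lt_of_le_of_ne (not_lt.1 hpos) hH])
  rw [abs_of_pos hpos] at hH1
  set K := ⌊H⁻¹⌋₊
  have hK_le : K * H ≤ 1 := by
    have := Nat.floor_le (inv_nonneg.2 hpos.le)
    calc K * H ≤ H⁻¹ * H := by gcongr
      _ = 1 := inv_mul_cancel₀ hH
  have hK_lt : 1 < (K + 1) * H := by
    have := Nat.lt_floor_add_one H⁻¹
    calc 1 = H⁻¹ * H := (inv_mul_cancel₀ hH).symm
      _ < (K + 1) * H := by gcongr
  have hnear : ∀ k : ℕ, |sinc ((k + 1) * H) ^ 2 - sinc (k * H) ^ 2| ≤ 2 * H := fun k => by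
    have hkH : 0 ≤ k * H := by positivity
    refine (abs_sinc_sq_sub_le_of_abs_deriv_le hkH (by linarith) fun x hx =>
      abs_deriv_sinc_sq_le (hkH.trans_lt hx.1)).trans_eq ?_
    ring
  have hfar : ∀ k : ℕ, K < k →
      |sinc ((k + 1) * H) ^ 2 - sinc (k * H) ^ 2| ≤ 4 / H * ((k : ℝ) ^ 2)⁻¹ := fun k hk => by
    have hkH : 1 ≤ k * H := by
      have : (K : ℝ) + 1 ≤ k := by exact_mod_cast hk
      nlinarith
    have := abs_sinc_sq_sub_le_of_abs_deriv_le (s := k * H) (t := (k + 1) * H)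
      (C := 4 / (k * H) ^ 2) (by positivity) (by gcongr; linarith) fun x hx =>
        (abs_deriv_sinc_sq_le_of_one_le (hkH.trans hx.1.le)).trans (by gcongr; exact hx.1.le)
    convert this using 1
    field_simp
    ring
  calc ∑ k ∈ range n, |sinc ((k + 1) * H) ^ 2 - sinc (k * H) ^ 2|
      ≤ ∑ k ∈ range (K + 1) ∪ Ioo K n, |sinc ((k + 1) * H) ^ 2 - sinc (k * H) ^ 2| := by
        refine sum_le_sum_of_subset_of_nonneg (fun k hk => ?_) fun _ _ _ => abs_nonneg _
        simp only [mem_union, mem_range, mem_Ioo] at hk ⊢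
        omega
    _ = ∑ k ∈ range (K + 1), |sinc ((k + 1) * H) ^ 2 - sinc (k * H) ^ 2|
          + ∑ k ∈ Ioo K n, |sinc ((k + 1) * H) ^ 2 - sinc (k * H) ^ 2| := by
        refine sum_union (disjoint_left.2 fun k h1 h2 => ?_)
        simp only [mem_range, mem_Ioo] at h1 h2
        omega
    _ ≤ ∑ k ∈ range (K + 1), 2 * H + ∑ k ∈ Ioo K n, 4 / H * ((k : ℝ) ^ 2)⁻¹ :=
        add_le_add (sum_le_sum fun k _ => hnear k)
          (sum_le_sum fun k hk => hfar k (mem_Ioo.1 hk).1)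
    _ = (K + 1) * H * 2 + 4 / H * ∑ k ∈ Ioo K n, ((k : ℝ) ^ 2)⁻¹ := by
        rw [sum_const, card_range, nsmul_eq_mul, ← mul_sum]
        push_cast
        ring
    _ ≤ 2 * 2 + 4 / H * (2 / (K + 1)) := by
        gcongr
        · linarith
        · exact sum_Ioo_inv_sq_le K n
    _ ≤ 2 * 2 + 4 / H * (2 * H) := by
        gcongr
        rw [div_le_iff₀ (by positivity)]
        linarith
    _ = 12 := by field_simp; ring

end Real

noncomputable def trigSeriesTerm (a b : ℕ → ℝ) (x : ℝ) (k : ℕ) : ℝ :=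
  if k = 0 then a 0 / 2 else a k * cos (k * x) + b k * sin (k * x)

noncomputable def twiceIntegratedPartialSum (a b : ℕ → ℝ) (n : ℕ) (x : ℝ) : ℝ :=
  a 0 / 4 * x ^ 2 - ∑ k ∈ Icc 1 n, (a k * cos (k * x) + b k * sin (k * x)) / (k : ℝ) ^ 2

theorem sum_range_succ_trigSeriesTerm (a b : ℕ → ℝ) (x : ℝ) (n : ℕ) :
    ∑ k ∈ range (n + 1), trigSeriesTerm a b x k =
      a 0 / 2 + ∑ k ∈ Icc 1 n, (a k * cos (k * x) + b k * sin (k * x)) := by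
  rw [sum_range_succ_eq_add_sum_Icc]
  refine congrArg₂ _ (if_pos rfl) (sum_congr rfl fun k hk => if_neg ?_)
  exact Nat.one_le_iff_ne_zero.mp (mem_Icc.mp hk).1

theorem trig_second_difference (A B k x h : ℝ) (hk : k ≠ 0) :
    (A * cos (k * (x + h)) + B * sin (k * (x + h))) / k ^ 2 +
        (A * cos (k * (x - h)) + B * sin (k * (x - h))) / k ^ 2 -
        2 * ((A * cos (k * x) + B * sin (k * x)) / k ^ 2) =
      -(h ^ 2 * ((A * cos (k * x) + B * sin (k * x)) * sinc (k * (h / 2)) ^ 2)) := by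
  rcases eq_or_ne h 0 with rfl | hh
  · simp only [add_zero, sub_zero]
    ring
  have hcos : cos (k * h) = 1 - 2 * sin (k * (h / 2)) ^ 2 := by
    rw [show k * h = 2 * (k * (h / 2)) by ring, cos_two_mul, cos_sq']
    ring
  rw [sinc_of_ne_zero (by positivity), mul_add k x h, mul_sub k x h, cos_add, cos_sub, sin_add,
    sin_sub, hcos]
  field_simp
  ring

theorem twiceIntegratedPartialSum_second_difference (a b : ℕ → ℝ) (n : ℕ) (x h : ℝ) :
    twiceIntegratedPartialSum a b n (x + h) + twiceIntegratedPartialSum a b n (x - h) -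
        2 * twiceIntegratedPartialSum a b n x =
      h ^ 2 * ∑ k ∈ range (n + 1), trigSeriesTerm a b x k * sinc (k * (h / 2)) ^ 2 := by
  have hterms : ∑ k ∈ Icc 1 n,
      ((a k * cos (k * (x + h)) + b k * sin (k * (x + h))) / (k : ℝ) ^ 2 +
        (a k * cos (k * (x - h)) + b k * sin (k * (x - h))) / (k : ℝ) ^ 2 -
        2 * ((a k * cos (k * x) + b k * sin (k * x)) / (k : ℝ) ^ 2)) =
      -(h ^ 2 * ∑ k ∈ Icc 1 n, trigSeriesTerm a b x k * sinc (k * (h / 2)) ^ 2) := by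
    rw [mul_sum, ← sum_neg_distrib]
    refine sum_congr rfl fun k hk => ?_
    have hk0 : k ≠ 0 := Nat.one_le_iff_ne_zero.mp (mem_Icc.mp hk).1
    rw [trigSeriesTerm, if_neg hk0]
    exact trig_second_difference _ _ _ x h (Nat.cast_ne_zero.mpr hk0)
  rw [sum_sub_distrib, sum_add_distrib, ← mul_sum] at hterms
  rw [sum_range_succ_eq_add_sum_Icc, trigSeriesTerm, if_pos rfl, Nat.cast_zero, zero_mul,
    sinc_zero]
  unfold twiceIntegratedPartialSum
  linear_combination -hterms

/-- (Riemann) If the trigonometric series converges everywhere to `f` and `F` is the sum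
of the twice formally integrated series, then at every `x` the Schwarz (second symmetric)
derivative of `F` exists and equals `f x`. -/
theorem riemann_second_symmetric_derivative (a b : ℕ → ℝ) (f F : ℝ → ℝ)
    (hconv : ∀ x : ℝ, Tendsto
      (fun n : ℕ => a 0 / 2 +
        ∑ k ∈ Finset.Icc 1 n, (a k * Real.cos (k * x) + b k * Real.sin (k * x)))
      atTop (𝓝 (f x)))
    (hF : ∀ x : ℝ, Tendsto
      (fun n : ℕ => a 0 / 4 * x ^ 2 -
        ∑ k ∈ Finset.Icc 1 n, (a k * Real.cos (k * x) + b k * Real.sin (k * x)) / (k : ℝ) ^ 2)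
      atTop (𝓝 (F x))) :
    ∀ x : ℝ, Tendsto (fun h : ℝ => (F (x + h) + F (x - h) - 2 * F x) / h ^ 2)
      (𝓝[≠] 0) (𝓝 (f x)) := by
  intro x
  have hF' : ∀ y, Tendsto (fun n => twiceIntegratedPartialSum a b n y) atTop (𝓝 (F y)) := hF
  have hseries : Tendsto (fun n => ∑ k ∈ range n, trigSeriesTerm a b x k) atTop (𝓝 (f x)) :=
    (tendsto_add_atTop_iff_nat 1).1 (by simpa only [sum_range_succ_trigSeriesTerm] using hconv x)
  have hkernel : ∀ k : ℕ, Tendsto (fun h : ℝ => sinc (k * (h / 2)) ^ 2) (𝓝[≠] 0) (𝓝 1) :=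
    fun k => by
      have : Continuous fun h : ℝ => sinc (k * (h / 2)) ^ 2 := by fun_prop
      simpa using (this.tendsto 0).mono_left nhdsWithin_le_nhds
  have hvar : ∀ᶠ h : ℝ in 𝓝[≠] 0, ∀ n, ∑ k ∈ range n,
      |sinc ((k + 1 : ℕ) * (h / 2)) ^ 2 - sinc (k * (h / 2)) ^ 2| ≤ 12 := by
    filter_upwards [mem_nhdsWithin_of_mem_nhds (Icc_mem_nhds (by norm_num : (-2 : ℝ) < 0)
      (by norm_num : (0 : ℝ) < 2)), self_mem_nhdsWithin] with h hmem hh n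
    push_cast
    exact sum_abs_sinc_sq_sub_le (div_ne_zero hh two_ne_zero)
      (abs_le.2 ⟨by linarith [hmem.1], by linarith [hmem.2]⟩) n
  refine tendsto_of_tendsto_sum_range_mul hseries hkernel hvar ?_
  filter_upwards [self_mem_nhdsWithin] with h hh
  have hh_sq : h ^ 2 ≠ 0 := pow_ne_zero 2 hh
  refine (tendsto_add_atTop_iff_nat 1).1 ?_
  refine ((((hF' (x + h)).add (hF' (x - h))).sub ((hF' x).const_mul 2)).div_const (h ^ 2)).congr
    fun n => ?_
  rw [twiceIntegratedPartialSum_second_difference, mul_div_cancel_left₀ _ hh_sq]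
end

section
/- (Schwarz) Let G be a continuous real-valued function on [a,b] whose Schwarz derivative satisfies D_s^2 G(x) = 0 for every x in (a,b). Then G is a linear (affine) function on [a,b]. Consequently, any two continuous functions on [a,b] with the same everywhere-defined Schwarz derivative on (a,b) differ by an affine function. -/
open Filter Topology Set

/-- Maximum principle: if the Schwarz quotient of `F` is eventually positive at each
interior point, and `F ≤ 0` at the endpoints, then `F ≤ 0` on `[a,b]`. -/
lemma schwarz_key_max (a b : ℝ) (hab : a < b) (F : ℝ → ℝ)
    (hF : ContinuousOn F (Set.Icc a b))
    (hpos : ∀ x ∈ Set.Ioo a b, ∀ᶠ h in 𝓝[≠] (0:ℝ),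
      0 < (F (x + h) + F (x - h) - 2 * F x) / h ^ 2)
    (ha : F a ≤ 0) (hb : F b ≤ 0) : ∀ x ∈ Set.Icc a b, F x ≤ 0 := by
  obtain ⟨x0, hx0, hmax⟩ := isCompact_Icc.exists_isMaxOn (Set.nonempty_Icc.2 hab.le) hF
  intro x hx
  have hle : F x ≤ F x0 := hmax hx
  by_contra hcon
  push_neg at hcon
  have hFx0 : 0 < F x0 := lt_of_lt_of_le hcon hle
  have hx0a : x0 ≠ a := by rintro rfl; linarith
  have hx0b : x0 ≠ b := by rintro rfl; linarith
  have hx0' : x0 ∈ Set.Ioo a b :=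
    ⟨lt_of_le_of_ne hx0.1 (Ne.symm hx0a), lt_of_le_of_ne hx0.2 hx0b⟩
  set δ := min (x0 - a) (b - x0) with hδ
  have hδpos : 0 < δ := lt_min (by linarith [hx0'.1]) (by linarith [hx0'.2])
  have hsmall : ∀ᶠ h in 𝓝[≠] (0:ℝ),
      (F (x0 + h) + F (x0 - h) - 2 * F x0) / h ^ 2 ≤ 0 := by
    have h1 : ∀ᶠ h in 𝓝 (0:ℝ), |h| < δ := by
      filter_upwards [Metric.ball_mem_nhds (0:ℝ) hδpos] with h hh
      simpa [Real.dist_eq] using hh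
    filter_upwards [h1.filter_mono nhdsWithin_le_nhds] with h hh
    have habs := abs_lt.1 hh
    have hd1 : δ ≤ x0 - a := min_le_left _ _
    have hd2 : δ ≤ b - x0 := min_le_right _ _
    have h1' : F (x0 + h) ≤ F x0 := hmax ⟨by linarith [habs.1], by linarith [habs.2]⟩
    have h2' : F (x0 - h) ≤ F x0 := hmax ⟨by linarith [habs.2], by linarith [habs.1]⟩
    exact div_nonpos_of_nonpos_of_nonneg (by linarith) (sq_nonneg h)
  obtain ⟨h, hpos', hnonpos⟩ := ((hpos x0 hx0').and hsmall).exists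
  linarith

/-- One-sided estimate: `G` lies below its chord. -/
lemma schwarz_le_chord (a b : ℝ) (hab : a < b) (G : ℝ → ℝ)
    (hG : ContinuousOn G (Set.Icc a b))
    (hD : ∀ x ∈ Set.Ioo a b,
      Tendsto (fun h : ℝ => (G (x + h) + G (x - h) - 2 * G x) / h ^ 2) (𝓝[≠] 0) (𝓝 0)) :
    ∀ x ∈ Set.Icc a b, G x ≤ G a + (G b - G a) / (b - a) * (x - a) := by
  intro x hx
  set c := (G b - G a) / (b - a) with hc
  have hcb : c * (b - a) = G b - G a := by
    rw [hc]; field_simp [sub_ne_zero.2 hab.ne']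
  have main : ∀ ε : ℝ, 0 < ε → G x - (G a + c * (x - a)) ≤ ε * ((x - a) * (b - x)) := by
    intro ε hε
    set F : ℝ → ℝ := fun y => G y - (G a + c * (y - a)) + ε * ((y - a) * (y - b)) with hF
    have hFc : ContinuousOn F (Set.Icc a b) := by
      apply ContinuousOn.add
      · exact hG.sub (by fun_prop)
      · fun_prop
    have hFa : F a ≤ 0 := by simp [hF]
    have hFb : F b ≤ 0 := by
      have : F b = G b - (G a + c * (b - a)) + ε * ((b - a) * (b - b)) := rfl
      rw [this, hcb]; ring_nf; exact le_refl 0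
    have hkey := schwarz_key_max a b hab F hFc ?_ hFa hFb
    · have hfx := hkey x hx
      have : F x = G x - (G a + c * (x - a)) + ε * ((x - a) * (x - b)) := rfl
      nlinarith [hfx]
    · intro y hy
      have hT : Tendsto (fun h : ℝ => (F (y + h) + F (y - h) - 2 * F y) / h ^ 2)
          (𝓝[≠] 0) (𝓝 (0 + 2 * ε)) := by
        refine ((hD y hy).add tendsto_const_nhds).congr' ?_
        filter_upwards [eventually_mem_nhdsWithin] with h hh
        have hh' : (h:ℝ) ≠ 0 := hh
        have hh2 : h ^ 2 ≠ 0 := pow_ne_zero _ hh'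
        have : F (y + h) + F (y - h) - 2 * F y
            = (G (y + h) + G (y - h) - 2 * G y) + 2 * ε * h ^ 2 := by
          simp only [hF]; ring
        rw [this, add_div, mul_div_assoc, div_self hh2, mul_one]
      rw [zero_add] at hT
      exact hT.eventually_const_lt (by positivity)
  have hC : 0 ≤ (x - a) * (b - x) := mul_nonneg (by linarith [hx.1]) (by linarith [hx.2])
  have ht : Tendsto (fun ε : ℝ => ε * ((x - a) * (b - x))) (𝓝[>] (0:ℝ)) (𝓝 0) := by
    have h0 : Tendsto (fun ε : ℝ => ε * ((x - a) * (b - x))) (𝓝 0)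
        (𝓝 (0 * ((x - a) * (b - x)))) := (tendsto_id.mul_const _)
    rw [zero_mul] at h0
    exact h0.mono_left nhdsWithin_le_nhds
  have hfin : G x - (G a + c * (x - a)) ≤ 0 := by
    refine ge_of_tendsto ht ?_
    filter_upwards [self_mem_nhdsWithin] with ε hε
    exact main ε hε
  linarith

lemma schwarz_affine (a b : ℝ) (hab : a < b) (G : ℝ → ℝ)
    (hG : ContinuousOn G (Set.Icc a b))
    (hD : ∀ x ∈ Set.Ioo a b,
      Tendsto (fun h : ℝ => (G (x + h) + G (x - h) - 2 * G x) / h ^ 2) (𝓝[≠] 0) (𝓝 0)) :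
    ∃ c d : ℝ, ∀ x ∈ Set.Icc a b, G x = c * x + d := by
  set c := (G b - G a) / (b - a) with hc
  refine ⟨c, G a - c * a, fun x hx => ?_⟩
  have h1 := schwarz_le_chord a b hab G hG hD x hx
  have hD' : ∀ x ∈ Set.Ioo a b,
      Tendsto (fun h : ℝ => ((-G (x + h)) + (-G (x - h)) - 2 * (-G x)) / h ^ 2)
        (𝓝[≠] 0) (𝓝 0) := by
    intro y hy
    have := (hD y hy).neg
    rw [neg_zero] at this
    exact this.congr (fun h => by ring)
  have h2 := schwarz_le_chord a b hab (fun y => -G y) (hG.neg) hD' x hx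
  have hnegc : (-G b - -G a) / (b - a) = -c := by rw [hc]; ring
  rw [hnegc] at h2
  have hmul := mul_sub c x a
  linarith

/-- (Schwarz) A continuous function on `[a,b]` whose Schwarz (second symmetric) derivative
vanishes on `(a,b)` is affine; consequently two continuous functions with the same
everywhere-defined Schwarz derivative on `(a,b)` differ by an affine function. -/
theorem schwarz_vanishing_second_symmetric_derivative (a b : ℝ) (hab : a < b) (G : ℝ → ℝ)
    (hG : ContinuousOn G (Set.Icc a b))
    (hD : ∀ x ∈ Set.Ioo a b,
      Tendsto (fun h : ℝ => (G (x + h) + G (x - h) - 2 * G x) / h ^ 2) (𝓝[≠] 0) (𝓝 0)) :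
    (∃ c d : ℝ, ∀ x ∈ Set.Icc a b, G x = c * x + d) ∧
    (∀ G₁ G₂ : ℝ → ℝ, ContinuousOn G₁ (Set.Icc a b) → ContinuousOn G₂ (Set.Icc a b) →
      (∀ x ∈ Set.Ioo a b, ∃ L : ℝ,
        Tendsto (fun h : ℝ => (G₁ (x + h) + G₁ (x - h) - 2 * G₁ x) / h ^ 2) (𝓝[≠] 0) (𝓝 L) ∧
        Tendsto (fun h : ℝ => (G₂ (x + h) + G₂ (x - h) - 2 * G₂ x) / h ^ 2) (𝓝[≠] 0) (𝓝 L)) →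
      ∃ c d : ℝ, ∀ x ∈ Set.Icc a b, G₁ x - G₂ x = c * x + d) := by
  constructor
  · exact schwarz_affine a b hab G hG hD
  · intro G₁ G₂ h1 h2 hsame
    have hH : ∀ x ∈ Set.Ioo a b,
        Tendsto (fun h : ℝ => ((G₁ (x + h) - G₂ (x + h)) + (G₁ (x - h) - G₂ (x - h))
          - 2 * (G₁ x - G₂ x)) / h ^ 2) (𝓝[≠] 0) (𝓝 0) := by
      intro y hy
      obtain ⟨L, t1, t2⟩ := hsame y hy
      have := t1.sub t2
      rw [sub_self] at this
      refine this.congr' ?_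
      filter_upwards [eventually_mem_nhdsWithin] with h hh
      have hh' : (h:ℝ) ≠ 0 := hh
      have hh2 : h ^ 2 ≠ 0 := pow_ne_zero _ hh'
      field_simp
      ring
    exact schwarz_affine a b hab (fun y => G₁ y - G₂ y) (h1.sub h2) hH
end
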